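/- arXiv:2211.01990 — 3 statements merged into one kernel-verified Lean document; each statement's English description precedes it below -/
import Mathlib

section
/- Let σ(1),…,σ(N−1) be non-negative real numbers. If there exist complex matrices W_i ∈ ℂ^{(i+1)×i} for 1 ≤ i ≤ N−1 such that W_1*·W_1 = σ(1)·Id_{ℂ} and W_i*·W_i − W_{i−1}·W_{i−1}* = σ(i)·Id_{ℂ^i} for 2 ≤ i ≤ N−1, then the N×N Hermitian matrix H = W_{N−1}·W_{N−1}* has eigenvalues γ(i) = σ(i) + σ(i+1) + ⋯ + σ(N−1) for 1 ≤ i ≤ N−1, together with γ(N) = 0. -/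
open Matrix Polynomial


variable {R : Type*} [CommRing R] {m n : Type*} [Fintype m] [Fintype n] [DecidableEq m] [DecidableEq n]

lemma aux_key (M : Matrix m n R) (N : Matrix n m R) :
    X ^ Fintype.card n * (M * N).charpoly = X ^ Fintype.card m * (N * M).charpoly := by
  classical
  set M' : Matrix m n R[X] := M.map C with hM'
  set N' : Matrix n m R[X] := N.map C with hN'
  set P : Matrix (m ⊕ n) (m ⊕ n) R[X] :=
    fromBlocks ((X : R[X]) • (1 : Matrix m m R[X])) M' N' (1 : Matrix n n R[X]) with hP
  have hPR : P * fromBlocks (1 : Matrix m m R[X]) 0 (-N') (1 : Matrix n n R[X]) =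
      fromBlocks ((X : R[X]) • (1 : Matrix m m R[X]) - M' * N') M' 0 (1 : Matrix n n R[X]) := by
    simp [hP, fromBlocks_multiply, Matrix.mul_smul, Matrix.smul_mul, sub_eq_add_neg,
      Matrix.neg_mul, Matrix.mul_neg]
  have hLP : fromBlocks (1 : Matrix m m R[X]) 0 (-N') ((X : R[X]) • (1 : Matrix n n R[X])) * P =
      fromBlocks ((X : R[X]) • (1 : Matrix m m R[X])) M' 0 ((X : R[X]) • (1 : Matrix n n R[X]) - N' * M') := by
    simp [hP, fromBlocks_multiply, Matrix.mul_smul, Matrix.smul_mul, sub_eq_add_neg,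
      Matrix.neg_mul, Matrix.mul_neg]
    abel
  have hdetP : P.det = (M * N).charpoly := by
    have := congrArg Matrix.det hPR
    rw [det_mul, det_fromBlocks_zero₁₂, det_fromBlocks_zero₂₁] at this
    simp only [det_one, mul_one, one_mul] at this
    rw [this, Matrix.charpoly, charmatrix]
    congr 1
    rw [Matrix.scalar_apply, ← Matrix.smul_one_eq_diagonal]
    congr 1
    simp [hM', hN', Matrix.map_mul]
  have hdet2 := congrArg Matrix.det hLP
  rw [det_mul, det_fromBlocks_zero₁₂, det_fromBlocks_zero₂₁, hdetP] at hdet2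
  have h1 : ((X : R[X]) • (1 : Matrix n n R[X])).det = X ^ Fintype.card n := by
    simp [det_smul]
  have h2 : ((X : R[X]) • (1 : Matrix m m R[X])).det = X ^ Fintype.card m := by
    simp [det_smul]
  rw [h1, det_one, one_mul] at hdet2
  rw [hdet2, h2]
  congr 1
  rw [Matrix.charpoly, charmatrix]
  congr 1
  rw [Matrix.scalar_apply, ← Matrix.smul_one_eq_diagonal]
  congr 1
  simp [hM', hN', Matrix.map_mul]


variable {R : Type*} [CommRing R] {n : Type*} [Fintype n] [DecidableEq n]

lemma aux_shift (A : Matrix n n R) (c : R) :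
    (A + c • (1 : Matrix n n R)).charpoly = A.charpoly.comp (X - C c) := by
  classical
  let φ : R[X] →+* R[X] := eval₂RingHom (C : R →+* R[X]) (X - C c)
  have hφ : ∀ p : R[X], φ p = p.comp (X - C c) := fun p => rfl
  have hmap : (charmatrix A).map φ = charmatrix (A + c • (1 : Matrix n n R)) := by
    ext i j
    by_cases h : i = j
    · subst h
      simp [φ, Matrix.map_apply, Matrix.add_apply, Matrix.smul_apply, Matrix.one_apply, C_add]
      ring
    · simp [φ, Matrix.map_apply, Matrix.add_apply, Matrix.smul_apply, Matrix.one_apply_ne h, h]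
  rw [Matrix.charpoly, ← hmap, ← RingHom.mapMatrix_apply, ← RingHom.map_det, Matrix.charpoly, hφ]

lemma aux_fin_one (M : Matrix (Fin 1) (Fin 1) R) : M.charpoly = X - C (M 0 0) := by
  rw [Matrix.charpoly, Matrix.det_fin_one, charmatrix_apply_eq]


lemma aux_WWH (k : ℕ) (W : Matrix (Fin (k + 1)) (Fin k) ℂ) :
    (W * Wᴴ).charpoly = X * (Wᴴ * W).charpoly := by
  have h := aux_key W Wᴴ
  simp only [Fintype.card_fin, pow_succ] at h
  rw [mul_assoc] at h
  exact mul_left_cancel₀ (pow_ne_zero k (X_ne_zero)) h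


/-- Let `σ 1, …, σ (N-1)` be non-negative reals, `N ≥ 2`.  If there are complex matrices
`W i : ℂ^{(i+1) × i}` for `1 ≤ i ≤ N-1` with `(W 1)ᴴ * W 1 = σ 1 • Id` and
`(W i)ᴴ * W i - W (i-1) * (W (i-1))ᴴ = σ i • Id` for `2 ≤ i ≤ N-1` (written with `i = j+1`),
then the Hermitian matrix `H = W (N-1) * (W (N-1))ᴴ` (of size `N × N`) has eigenvalues
`γ i = σ i + ⋯ + σ (N-1)` for `1 ≤ i ≤ N-1` together with `γ N = 0`, counted with algebraic
multiplicity, i.e. its characteristic polynomial is `∏_{i=1}^{N} (X - γ i)`. -/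
theorem stmt1 (N : ℕ) (hN : 2 ≤ N) (σ : ℕ → ℝ)
    (hσ : ∀ i, 1 ≤ i → i ≤ N - 1 → 0 ≤ σ i)
    (W : (i : ℕ) → Matrix (Fin (i + 1)) (Fin i) ℂ)
    (h1 : (W 1)ᴴ * W 1 = ((σ 1 : ℝ) : ℂ) • (1 : Matrix (Fin 1) (Fin 1) ℂ))
    (hrec : ∀ j, 1 ≤ j → j + 1 ≤ N - 1 →
      (W (j + 1))ᴴ * W (j + 1) - W j * (W j)ᴴ =
        ((σ (j + 1) : ℝ) : ℂ) • (1 : Matrix (Fin (j + 1)) (Fin (j + 1)) ℂ)) :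
    (W (N - 1) * (W (N - 1))ᴴ).charpoly =
      ∏ i ∈ Finset.range N,
        (X - C ((∑ j ∈ Finset.Icc (i + 1) (N - 1), σ j : ℝ) : ℂ)) := by
  have key : ∀ i, 1 ≤ i → i ≤ N - 1 → ((W i)ᴴ * W i).charpoly =
      ∏ k ∈ Finset.range i, (X - C ((∑ j ∈ Finset.Icc (k + 1) i, σ j : ℝ) : ℂ)) := by
    intro i hi1
    induction i, hi1 using Nat.le_induction with
    | base =>
      intro _
      rw [h1, aux_fin_one]
      simp
    | succ i hi ih =>
      intro hsucc
      have hW : (W (i + 1))ᴴ * W (i + 1) =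
          W i * (W i)ᴴ + ((σ (i + 1) : ℝ) : ℂ) • (1 : Matrix (Fin (i + 1)) (Fin (i + 1)) ℂ) := by
        have h := hrec i hi hsucc
        rw [sub_eq_iff_eq_add] at h
        rw [h]; exact add_comm _ _
      rw [hW, aux_shift, aux_WWH, ih (le_trans (Nat.le_succ i) hsucc)]
      rw [mul_comp, X_comp, prod_comp, Finset.prod_range_succ]
      rw [mul_comm]
      congr 1
      · refine Finset.prod_congr rfl fun k hk => ?_
        rw [Finset.mem_range] at hk
        rw [sub_comp, X_comp, C_comp]
        rw [Finset.sum_Icc_succ_top (by omega : k + 1 ≤ i + 1)]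
        push_cast
        rw [C_add]
        ring
      · rw [Finset.Icc_self, Finset.sum_singleton]
  rw [aux_WWH, key (N - 1) (by omega) le_rfl]
  have hsplit : Finset.range N = Finset.range ((N - 1) + 1) := by
    congr 1
    omega
  rw [hsplit, Finset.prod_range_succ]
  rw [Finset.Icc_eq_empty (by omega), Finset.sum_empty]
  push_cast
  rw [C_0, sub_zero, mul_comm]
end

section
/- Let σ(1),…,σ(N−1) be non-negative real numbers and set γ(i) = σ(i)+σ(i+1)+⋯+σ(N−1) for 1 ≤ i ≤ N−1 and γ(N) = 0. Then there exist complex matrices W_i ∈ ℂ^{(i+1)×i} for 1 ≤ i ≤ N−1 with W_1*·W_1 = σ(1)·Id_{ℂ} and W_i*·W_i − W_{i−1}·W_{i−1}* = σ(i)·Id_{ℂ^i} for 2 ≤ i ≤ N−1; in particular the N×N Hermitian matrix W_{N−1}·W_{N−1}* has spectrum (γ(1),…,γ(N)). -/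
open Matrix Polynomial


lemma Wmul1 {i : ℕ} (a : Fin i → ℂ) :
    (Matrix.of fun (k : Fin (i+1)) (j : Fin i) => if k = j.castSucc then a j else 0)ᴴ *
      (Matrix.of fun (k : Fin (i+1)) (j : Fin i) => if k = j.castSucc then a j else 0) =
    Matrix.diagonal (fun j => star (a j) * a j) := by
  ext j j'
  simp only [mul_apply, conjTranspose_apply, of_apply, apply_ite (star : ℂ → ℂ), star_zero,
    ite_mul, mul_ite, zero_mul, mul_zero]
  rcases eq_or_ne j j' with rfl | h
  · simp [Finset.sum_ite_eq' Finset.univ (Fin.castSucc j)]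
  · rw [Finset.sum_eq_zero, diagonal_apply_ne _ h]
    intro k _
    split_ifs with h1 h2
    · exact absurd (Fin.castSucc_injective _ (h1.symm.trans h2)).symm h
    all_goals simp

lemma Wmul2 {i : ℕ} (a : Fin i → ℂ) :
    (Matrix.of fun (k : Fin (i+1)) (j : Fin i) => if k = j.castSucc then a j else 0) *
      (Matrix.of fun (k : Fin (i+1)) (j : Fin i) => if k = j.castSucc then a j else 0)ᴴ =
    Matrix.diagonal (fun k : Fin (i+1) =>
      if h : (k : ℕ) < i then a ⟨k, h⟩ * star (a ⟨k, h⟩) else 0) := by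
  ext k k'
  simp only [mul_apply, conjTranspose_apply, of_apply, apply_ite (star : ℂ → ℂ), star_zero,
    ite_mul, mul_ite, zero_mul, mul_zero]
  rcases eq_or_ne k k' with rfl | h
  · rw [diagonal_apply_eq]
    rcases Nat.lt_or_ge (k : ℕ) i with hk | hk
    · rw [Finset.sum_eq_single (⟨(k : ℕ), hk⟩ : Fin i)]
      · simp [dif_pos hk, Fin.ext_iff]
      · intro b _ hb
        split_ifs with h1 h2
        · exact absurd (by simpa [Fin.ext_iff] using h1.symm) hb
        all_goals simp
      · simp
    · rw [dif_neg (by omega), Finset.sum_eq_zero]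
      intro b _
      split_ifs with h1 h2
      · have := b.isLt
        simp [Fin.ext_iff] at h1
        omega
      all_goals simp
  · rw [diagonal_apply_ne _ h, Finset.sum_eq_zero]
    intro b _
    split_ifs with h1 h2
    · exact absurd (h1.trans h2.symm).symm h
    all_goals simp

lemma charpoly_diag {n : ℕ} (d : Fin n → ℂ) :
    (Matrix.diagonal d).charpoly = ∏ i : Fin n, (X - C (d i)) := by
  rw [Matrix.charpoly, ← Matrix.det_diagonal]
  congr 1
  ext i j
  rcases eq_or_ne i j with rfl | h
  · simp [Matrix.charmatrix_apply_eq]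
  · simp [Matrix.charmatrix_apply_ne _ _ _ h, Matrix.diagonal_apply_ne _ h]

/-- Let `σ 1, …, σ (N-1)` be non-negative reals, `N ≥ 2`, and set
`γ i = σ i + ⋯ + σ (N-1)` for `1 ≤ i ≤ N-1`, `γ N = 0`.  Then there exist complex matrices
`W i : ℂ^{(i+1) × i}`, `1 ≤ i ≤ N-1`, with `(W 1)ᴴ * W 1 = σ 1 • Id` and
`(W (j+1))ᴴ * W (j+1) - W j * (W j)ᴴ = σ (j+1) • Id` for `1 ≤ j`, `j+1 ≤ N-1`; in particular
the `N × N` Hermitian matrix `W (N-1) * (W (N-1))ᴴ` has spectrum `(γ 1, …, γ N)`, counted with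
algebraic multiplicity. -/
theorem stmt2 (N : ℕ) (hN : 2 ≤ N) (σ : ℕ → ℝ)
    (hσ : ∀ i, 1 ≤ i → i ≤ N - 1 → 0 ≤ σ i) :
    ∃ W : (i : ℕ) → Matrix (Fin (i + 1)) (Fin i) ℂ,
      ((W 1)ᴴ * W 1 = ((σ 1 : ℝ) : ℂ) • (1 : Matrix (Fin 1) (Fin 1) ℂ)) ∧
      (∀ j, 1 ≤ j → j + 1 ≤ N - 1 →
        (W (j + 1))ᴴ * W (j + 1) - W j * (W j)ᴴ =
          ((σ (j + 1) : ℝ) : ℂ) • (1 : Matrix (Fin (j + 1)) (Fin (j + 1)) ℂ)) ∧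
      (W (N - 1) * (W (N - 1))ᴴ).charpoly =
        ∏ i ∈ Finset.range N,
          (X - C ((∑ j ∈ Finset.Icc (i + 1) (N - 1), σ j : ℝ) : ℂ)) := by
  set c : (i : ℕ) → Fin i → ℂ :=
    fun i j => ((Real.sqrt (∑ t ∈ Finset.Icc ((j : ℕ) + 1) i, σ t) : ℝ) : ℂ) with hc
  refine ⟨fun i => Matrix.of fun k j => if k = j.castSucc then c i j else 0, ?_, ?_, ?_⟩
  · rw [Wmul1]
    have h10 : star (c 1 0) * c 1 0 = ((σ 1 : ℝ) : ℂ) := by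
      have h1 : (0 : ℝ) ≤ σ 1 := hσ 1 le_rfl (by omega)
      simp [hc, Complex.conj_ofReal, ← Complex.ofReal_mul,
        Real.mul_self_sqrt h1]
    have hd : (fun j : Fin 1 => star (c 1 j) * c 1 j) = fun _ => ((σ 1 : ℝ) : ℂ) := by
      funext j
      have hj : j = 0 := Subsingleton.elim _ _
      rw [hj, h10]
    rw [hd, Matrix.smul_one_eq_diagonal]
  · intro j hj hjN
    have key : ∀ (m : ℕ), m ≤ N - 1 → ∀ (k : Fin m),
        star (c m k) * c m k = ((∑ t ∈ Finset.Icc ((k : ℕ) + 1) m, σ t : ℝ) : ℂ) := by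
      intro m hm k
      have hnn : (0 : ℝ) ≤ ∑ t ∈ Finset.Icc ((k : ℕ) + 1) m, σ t :=
        Finset.sum_nonneg fun t ht => by
          simp only [Finset.mem_Icc] at ht
          exact hσ t (by omega) (by omega)
      simp [hc, Complex.conj_ofReal, ← Complex.ofReal_mul, Real.mul_self_sqrt hnn]
    rw [Wmul1, Wmul2, Matrix.smul_one_eq_diagonal, Matrix.diagonal_sub]
    refine congrArg Matrix.diagonal (funext fun k => ?_)
    show star (c (j + 1) k) * c (j + 1) k - _ = _
    have hk : (k : ℕ) ≤ j := by omega
    rcases Nat.lt_or_ge (k : ℕ) j with hkj | hkj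
    · rw [key (j + 1) hjN k, dif_pos hkj, mul_comm,
        key j (by omega) ⟨(k : ℕ), hkj⟩]
      simp only [Pi.sub_apply]
      rw [← Complex.ofReal_sub]
      congr 1
      rw [Finset.sum_Icc_succ_top (by omega : (k : ℕ) + 1 ≤ j + 1)]
      ring
    · have hkj' : (k : ℕ) = j := by omega
      rw [key (j + 1) hjN k, dif_neg (by omega)]
      simp only [Pi.sub_apply, sub_zero, hkj']
      rw [Finset.Icc_self, Finset.sum_singleton]
  · have key : ∀ (k : Fin (N - 1)),
        c (N - 1) k * star (c (N - 1) k) =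
          ((∑ t ∈ Finset.Icc ((k : ℕ) + 1) (N - 1), σ t : ℝ) : ℂ) := by
      intro k
      have hnn : (0 : ℝ) ≤ ∑ t ∈ Finset.Icc ((k : ℕ) + 1) (N - 1), σ t :=
        Finset.sum_nonneg fun t ht => by
          simp only [Finset.mem_Icc] at ht
          exact hσ t (by omega) (by omega)
      simp [hc, Complex.conj_ofReal, ← Complex.ofReal_mul, Real.mul_self_sqrt hnn]
    rw [Wmul2]
    have hd : (fun k : Fin (N - 1 + 1) =>
        if h : (k : ℕ) < N - 1 then c (N - 1) ⟨k, h⟩ * star (c (N - 1) ⟨k, h⟩) else 0) =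
        fun k : Fin (N - 1 + 1) =>
          ((∑ t ∈ Finset.Icc ((k : ℕ) + 1) (N - 1), σ t : ℝ) : ℂ) := by
      funext k
      rcases Nat.lt_or_ge (k : ℕ) (N - 1) with hk | hk
      · rw [dif_pos hk, key ⟨(k : ℕ), hk⟩]
      · rw [dif_neg (by omega)]
        have : Finset.Icc ((k : ℕ) + 1) (N - 1) = ∅ := by
          apply Finset.Icc_eq_empty
          omega
        simp [this]
    rw [hd, charpoly_diag, Fin.prod_univ_eq_prod_range
      (fun i => X - C ((∑ t ∈ Finset.Icc (i + 1) (N - 1), σ t : ℝ) : ℂ)) (N - 1 + 1)]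
    have hN1 : N - 1 + 1 = N := by omega
    rw [hN1]
end

section
/- Let σ(1),…,σ(N−1) be non-positive real numbers. If there exist complex matrices W_i ∈ ℂ^{i×(i+1)} for 1 ≤ i ≤ N−1 such that W_1·W_1* = −σ(1)·Id_{ℂ} and W_i·W_i* − W_{i−1}*·W_{i−1} = −σ(i)·Id_{ℂ^i} for 2 ≤ i ≤ N−1, then the N×N Hermitian matrix H = W_{N−1}*·W_{N−1} has eigenvalues γ(i) = −(σ(i)+σ(i+1)+⋯+σ(N−1)) for 1 ≤ i ≤ N−1, together with γ(N) = 0. -/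
open Matrix Polynomial

private lemma charmatrix_map_frac {k : Type*} [Fintype k] [DecidableEq k]
    {F : Type*} [Field F] (φ : ℂ[X] →+* F) (M : Matrix k k ℂ) :
    (charmatrix M).map φ = φ X • (1 : Matrix k k F) - M.map (φ.comp C) := by
  ext i j
  by_cases h : i = j
  · subst h
    simp [charmatrix_apply_eq]
  · simp [charmatrix_apply_ne _ _ _ h, Matrix.one_apply_ne h]

private lemma charpoly_frac {k : Type*} [Fintype k] [DecidableEq k]
    {F : Type*} [Field F] (φ : ℂ[X] →+* F) (hx : φ X ≠ 0) (M : Matrix k k ℂ) :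
    φ M.charpoly =
      (φ X) ^ Fintype.card k * ((1 : Matrix k k F) - (φ X)⁻¹ • M.map (φ.comp C)).det := by
  have h1 : φ X • ((1 : Matrix k k F) - (φ X)⁻¹ • M.map (φ.comp C)) =
      φ X • (1 : Matrix k k F) - M.map (φ.comp C) := by
    rw [smul_sub, smul_smul, mul_inv_cancel₀ hx, one_smul]
  rw [Matrix.charpoly, RingHom.map_det, RingHom.mapMatrix_apply, charmatrix_map_frac, ← h1,
    Matrix.det_smul]

/-- `X^|m| ⬝ charpoly (B ⬝ A) = X^|n| ⬝ charpoly (A ⬝ B)` for rectangular `A, B`. -/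
private lemma charpoly_mul_comm_rect {m n : Type*} [Fintype m] [Fintype n]
    [DecidableEq m] [DecidableEq n] (A : Matrix m n ℂ) (B : Matrix n m ℂ) :
    X ^ Fintype.card m * (B * A).charpoly = X ^ Fintype.card n * (A * B).charpoly := by
  set F := FractionRing ℂ[X]
  set φ : ℂ[X] →+* F := algebraMap ℂ[X] F with hφ
  have hinj : Function.Injective φ := IsFractionRing.injective _ _
  have hx : φ X ≠ 0 := fun h => X_ne_zero (hinj (h.trans (map_zero φ).symm))
  apply hinj
  set ψ : ℂ →+* F := φ.comp C
  have hBA : (B * A).map ψ = B.map ψ * A.map ψ := Matrix.map_mul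
  have hAB : (A * B).map ψ = A.map ψ * B.map ψ := Matrix.map_mul
  have key : ((1 : Matrix n n F) - (φ X)⁻¹ • (B.map ψ * A.map ψ)).det =
      ((1 : Matrix m m F) - (φ X)⁻¹ • (A.map ψ * B.map ψ)).det := by
    rw [← Matrix.smul_mul, Matrix.det_one_sub_mul_comm, Matrix.mul_smul]
  rw [_root_.map_mul, _root_.map_mul, map_pow, map_pow, charpoly_frac φ hx, charpoly_frac φ hx,
    hBA, hAB, key]
  ring

private lemma charpoly_conjTranspose_mul (i : ℕ) (A : Matrix (Fin i) (Fin (i + 1)) ℂ) :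
    (Aᴴ * A).charpoly = X * (A * Aᴴ).charpoly := by
  have h := charpoly_mul_comm_rect A Aᴴ
  simp only [Fintype.card_fin] at h
  have hXi : (X : ℂ[X]) ^ i ≠ 0 := pow_ne_zero _ X_ne_zero
  apply mul_left_cancel₀ hXi
  rw [h, pow_succ, mul_assoc, mul_comm (X : ℂ[X])]

/-- Shifting a matrix by a scalar multiple of the identity shifts the charpoly roots. -/
private lemma charpoly_add_smul_one {k : Type*} [Fintype k] [DecidableEq k]
    (M : Matrix k k ℂ) (c : ℂ) {s : Finset ℕ} {a : ℕ → ℂ}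
    (h : M.charpoly = ∏ j ∈ s, (X - C (a j))) :
    (M + c • (1 : Matrix k k ℂ)).charpoly = ∏ j ∈ s, (X - C (a j + c)) := by
  set g : ℂ[X] →+* ℂ[X] := eval₂RingHom C (X - C c) with hg
  have hgX : g X = X - C c := eval₂_X _ _
  have hgC : ∀ z : ℂ, g (C z) = C z := fun z => eval₂_C _ _
  have hchar : (charmatrix M).map g = charmatrix (M + c • (1 : Matrix k k ℂ)) := by
    ext i j
    by_cases hij : i = j
    · subst hij
      simp only [Matrix.map_apply, charmatrix_apply_eq, map_sub, hgX, hgC,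
        Matrix.add_apply, Matrix.smul_apply, Matrix.one_apply_eq, smul_eq_mul, mul_one, map_add]
      ring_nf
    · simp [Matrix.map_apply, charmatrix_apply_ne _ _ _ hij, hgC,
        Matrix.one_apply_ne hij]
  have : g M.charpoly = (M + c • (1 : Matrix k k ℂ)).charpoly := by
    rw [Matrix.charpoly, RingHom.map_det, RingHom.mapMatrix_apply, hchar, Matrix.charpoly]
  rw [← this, h, map_prod]
  refine Finset.prod_congr rfl fun j _ => ?_
  rw [map_sub, hgX, hgC, C_add]
  ring

/-- Let `σ 1, …, σ (N-1)` be non-positive reals, `N ≥ 2`.  If there are complex matrices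
`W i : ℂ^{i × (i+1)}` for `1 ≤ i ≤ N-1` with `W 1 * (W 1)ᴴ = -σ 1 • Id` and
`W i * (W i)ᴴ - (W (i-1))ᴴ * W (i-1) = -σ i • Id` for `2 ≤ i ≤ N-1` (written with `i = j+1`),
then the `N × N` Hermitian matrix `H = (W (N-1))ᴴ * W (N-1)` has eigenvalues
`γ i = -(σ i + ⋯ + σ (N-1))` for `1 ≤ i ≤ N-1` together with `γ N = 0`, counted with algebraic
multiplicity. -/
theorem stmt3 (N : ℕ) (hN : 2 ≤ N) (σ : ℕ → ℝ)
    (hσ : ∀ i, 1 ≤ i → i ≤ N - 1 → σ i ≤ 0)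
    (W : (i : ℕ) → Matrix (Fin i) (Fin (i + 1)) ℂ)
    (h1 : W 1 * (W 1)ᴴ = ((-σ 1 : ℝ) : ℂ) • (1 : Matrix (Fin 1) (Fin 1) ℂ))
    (hrec : ∀ j, 1 ≤ j → j + 1 ≤ N - 1 →
      W (j + 1) * (W (j + 1))ᴴ - (W j)ᴴ * W j =
        ((-σ (j + 1) : ℝ) : ℂ) • (1 : Matrix (Fin (j + 1)) (Fin (j + 1)) ℂ)) :
    ((W (N - 1))ᴴ * W (N - 1)).charpoly =
      ∏ i ∈ Finset.range N,
        (X - C ((-(∑ j ∈ Finset.Icc (i + 1) (N - 1), σ j) : ℝ) : ℂ)) := by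
  obtain ⟨n, rfl⟩ : ∃ n, N = n + 1 := ⟨N - 1, by omega⟩
  have hn1 : 1 ≤ n := by omega
  simp only [Nat.add_sub_cancel] at hrec hσ ⊢
  -- main induction on the size of `W i * (W i)ᴴ`
  have main : ∀ i, 1 ≤ i → i ≤ n →
      (W i * (W i)ᴴ).charpoly =
        ∏ k ∈ Finset.range i, (X - C ((-(∑ j ∈ Finset.Icc (k + 1) i, σ j) : ℝ) : ℂ)) := by
    intro i hi1
    induction i, hi1 using Nat.le_induction with
    | base =>
      intro _
      rw [h1]
      have h00 : (((-σ 1 : ℝ) : ℂ) • (1 : Matrix (Fin 1) (Fin 1) ℂ)).charpoly =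
          X - C ((-σ 1 : ℝ) : ℂ) := by
        rw [Matrix.charpoly, Matrix.det_fin_one]
        simp [charmatrix_apply_eq]
      rw [h00]
      simp
    | succ i hi ih =>
      intro hin
      have ihi := ih (by omega)
      set c : ℂ := ((-σ (i + 1) : ℝ) : ℂ) with hc
      have hWi : W (i + 1) * (W (i + 1))ᴴ =
          (W i)ᴴ * W i + c • (1 : Matrix (Fin (i + 1)) (Fin (i + 1)) ℂ) := by
        have := hrec i (by omega) (by omega)
        rw [sub_eq_iff_eq_add] at this
        rw [this]; exact add_comm _ _
      have hWtW : ((W i)ᴴ * W i).charpoly =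
          ∏ k ∈ Finset.range (i + 1),
            (X - C ((-(∑ j ∈ Finset.Icc (k + 1) i, σ j) : ℝ) : ℂ)) := by
        rw [charpoly_conjTranspose_mul, ihi, Finset.prod_range_succ]
        rw [show Finset.Icc (i + 1) i = ∅ from Finset.Icc_eq_empty (by omega)]
        simp [mul_comm]
      rw [hWi, charpoly_add_smul_one _ _ hWtW]
      refine Finset.prod_congr rfl fun k hk => ?_
      have hk' : k + 1 ≤ i + 1 := by
        simp only [Finset.mem_range] at hk; omega
      rw [Finset.sum_Icc_succ_top hk']
      congr 1
      rw [hc]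
      push_cast
      ring_nf
  have hWn := main n hn1 le_rfl
  show ((W n)ᴴ * W n).charpoly =
    ∏ i ∈ Finset.range (n + 1), (X - C ((-(∑ j ∈ Finset.Icc (i + 1) n, σ j) : ℝ) : ℂ))
  rw [charpoly_conjTranspose_mul, hWn, Finset.prod_range_succ]
  rw [show Finset.Icc (n + 1) n = ∅ from Finset.Icc_eq_empty (by omega)]
  simp [mul_comm]
end
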